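/- For all integers n ≥ 0 and m ≥ 0: Σ_{k=0}^{n} C(2k, k)·O_k·H_{n−k}(m)/4^k = (1/2)·Σ_{k=0}^{n} C(2k, k)·H_{n−k}(m+1)/4^k. -/

import Mathlib

open Finset

/-- Multiple harmonic-like numbers `H_n(m)`: the sum of `1/(k_1 ⋯ k_m)` over all
`m`-tuples of positive integers with `k_1 + ⋯ + k_m ≤ n`. -/
def Hml (n m : ℕ) : ℚ :=
  ∑ k ∈ (Fintype.piFinset fun _ : Fin m => Finset.Icc 1 n).filter
      (fun k => ∑ i, k i ≤ n),
    ∏ i, (1 : ℚ) / (k i : ℚ)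

/-- The `n`-th harmonic number. -/
def harm (n : ℕ) : ℚ := ∑ j ∈ Finset.Icc 1 n, (1 : ℚ) / (j : ℚ)

/-- The `n`-th second-order harmonic number. -/
def harm2 (n : ℕ) : ℚ := ∑ j ∈ Finset.Icc 1 n, (1 : ℚ) / (j : ℚ) ^ 2

/-- The `n`-th odd harmonic number. -/
def oddharm (n : ℕ) : ℚ := ∑ k ∈ Finset.Icc 1 n, (1 : ℚ) / (2 * (k : ℚ) - 1)

/-- Signed Stirling numbers of the first kind. -/
def stirlingFirst : ℕ → ℕ → ℤ
  | 0, 0 => 1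
  | 0, _ + 1 => 0
  | _ + 1, 0 => 0
  | n + 1, k + 1 => stirlingFirst n k - n * stirlingFirst n (k + 1)

/-- Generalized binomial coefficient `C(r, k) = r(r−1)⋯(r−k+1)/k!`. -/
noncomputable def gchoose (r : ℂ) (k : ℕ) : ℂ :=
  (∏ i ∈ Finset.range k, (r - i)) / (k.factorial : ℂ)

/-!
Write `c k = C(2k, k) / 4^k`, the coefficients of `C = (1 - X)^(-1/2)`, and `L = -log (1 - X)`.
Splitting off the first entry of a tuple gives `H_n(m+1) = ∑_{i ≥ 1} H_{n-i}(m) / i`, i.e. the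
generating function of `H_·(m+1)` is `L` times that of `H_·(m)`. Both sides of the theorem are
therefore `n`-th coefficients of products with the generating function of `H_·(m)`, and it remains
to show `C * L = 2 ∑ c k O_k X^k`. Both series vanish at `0` and solve `2 (1 - X) P' = P + 2 C`,
because `2 (1 - X) C' = C` and `(1 - X) L' = 1`; this linear ODE has a unique solution.
-/

open PowerSeries

lemma coeff_one_sub_X_mul_derivative {R : Type*} [CommRing R] (f : R⟦X⟧) (k : ℕ) :
    coeff k ((1 - X) * d⁄dX R f) = (k + 1) * coeff (k + 1) f - k * coeff k f := by
  cases k with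
  | zero => simpa [sub_mul] using coeff_derivative f 0
  | succ k =>
    simp only [sub_mul, one_mul, map_sub, coeff_derivative, coeff_succ_X_mul, Nat.cast_add,
      Nat.cast_one]
    ring

lemma coeff_two_mul_one_sub_X_mul_derivative {R : Type*} [CommRing R] (f : R⟦X⟧) (k : ℕ) :
    coeff k (2 * (1 - X) * d⁄dX R f) = 2 * ((k + 1) * coeff (k + 1) f - k * coeff k f) := by
  rw [← map_ofNat C 2, mul_assoc, coeff_C_mul, coeff_one_sub_X_mul_derivative]

lemma eq_zero_of_two_mul_one_sub_X_mul_derivative {K : Type*} [Field K] [CharZero K] {f : K⟦X⟧} (h0 : constantCoeff f = 0)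
    (hf : 2 * (1 - X) * d⁄dX K f = f) : f = 0 := by
  ext k
  induction k with
  | zero => simpa using h0
  | succ k ih =>
    have hk := congrArg (coeff k) hf
    rw [coeff_two_mul_one_sub_X_mul_derivative] at hk
    simp only [map_zero] at ih ⊢
    rw [ih] at hk
    simpa [Nat.cast_add_one_ne_zero k] using hk

lemma centralBinom_div_four_pow_succ (k : ℕ) :
    2 * (k + 1) * (((k + 1).centralBinom : ℚ) / 4 ^ (k + 1)) =
      (2 * k + 1) * ((k.centralBinom : ℚ) / 4 ^ k) := by
  have h : ((k + 1 : ℕ) : ℚ) * (k + 1).centralBinom = 2 * (2 * k + 1) * k.centralBinom := by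
    exact_mod_cast Nat.succ_mul_centralBinom_succ k
  push_cast at h
  rw [pow_succ]
  field_simp
  linear_combination 2 * h

lemma oddharm_succ (k : ℕ) : oddharm (k + 1) = oddharm k + 1 / (2 * k + 1) := by
  rw [oddharm, Finset.sum_Icc_succ_top (by omega), ← oddharm]
  push_cast
  ring_nf

/-- `(1 - X)^(-1/2)`. -/
def centralBinomSeries : ℚ⟦X⟧ := mk fun k => (k.centralBinom : ℚ) / 4 ^ k

/-- `-log (1 - X)`; its constant coefficient is `(0 : ℚ)⁻¹ = 0`. -/
def logInvOneSub : ℚ⟦X⟧ := mk fun i => (i : ℚ)⁻¹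

def centralBinomOddharmSeries : ℚ⟦X⟧ := mk fun k => (k.centralBinom : ℚ) / 4 ^ k * oddharm k

lemma two_mul_one_sub_X_mul_derivative_centralBinomSeries :
    2 * (1 - X) * d⁄dX ℚ centralBinomSeries = centralBinomSeries := by
  ext k
  simp only [coeff_two_mul_one_sub_X_mul_derivative, centralBinomSeries, coeff_mk]
  linear_combination centralBinom_div_four_pow_succ k

lemma one_sub_X_mul_derivative_logInvOneSub : (1 - X) * d⁄dX ℚ logInvOneSub = 1 := by
  ext k
  rw [coeff_one_sub_X_mul_derivative, logInvOneSub, coeff_mk, coeff_mk, coeff_one]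
  rcases k with _ | k
  · simp
  · field_simp
    simp

lemma two_mul_one_sub_X_mul_derivative_centralBinomOddharmSeries :
    2 * (1 - X) * d⁄dX ℚ centralBinomOddharmSeries =
      centralBinomOddharmSeries + centralBinomSeries := by
  ext k
  simp only [coeff_two_mul_one_sub_X_mul_derivative, centralBinomOddharmSeries,
    centralBinomSeries, map_add, coeff_mk, oddharm_succ]
  have : (2 * k + 1 : ℚ) ≠ 0 := by positivity
  linear_combination (norm := skip) (oddharm k + 1 / (2 * k + 1)) * centralBinom_div_four_pow_succ k
  field_simp
  ring

lemma centralBinomSeries_mul_logInvOneSub :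
    centralBinomSeries * logInvOneSub = 2 * centralBinomOddharmSeries := by
  rw [← sub_eq_zero]
  apply eq_zero_of_two_mul_one_sub_X_mul_derivative
  · simp [centralBinomOddharmSeries, centralBinomSeries, logInvOneSub, oddharm]
  · have h2 : d⁄dX ℚ (2 * centralBinomOddharmSeries) = 2 * d⁄dX ℚ centralBinomOddharmSeries := by
      rw [two_mul, map_add, two_mul]
    rw [map_sub, Derivation.leibniz, smul_eq_mul, smul_eq_mul, h2]
    linear_combination logInvOneSub * two_mul_one_sub_X_mul_derivative_centralBinomSeries +
      2 * centralBinomSeries * one_sub_X_mul_derivative_logInvOneSub -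
      2 * two_mul_one_sub_X_mul_derivative_centralBinomOddharmSeries

lemma mem_filter_piFinset_Icc_iff {n m : ℕ} {k : Fin m → ℕ} :
    k ∈ (Fintype.piFinset fun _ : Fin m => Icc 1 n).filter (fun k => ∑ i, k i ≤ n) ↔
      (∀ i, 1 ≤ k i) ∧ ∑ i, k i ≤ n := by
  simp only [mem_filter, Fintype.mem_piFinset, mem_Icc]
  refine ⟨fun h => ⟨fun i => (h.1 i).1, h.2⟩, fun h => ⟨fun i => ⟨h.1 i, ?_⟩, h.2⟩⟩
  exact (single_le_sum (fun j _ => Nat.zero_le (k j)) (mem_univ i)).trans h.2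

lemma Hml_succ (n m : ℕ) : Hml n (m + 1) = ∑ i ∈ Icc 1 n, (i : ℚ)⁻¹ * Hml (n - i) m := by
  simp only [Hml, mul_sum]
  rw [sum_sigma']
  refine sum_nbij' (fun k => ⟨k 0, Fin.tail k⟩) (fun p => Fin.cons p.1 p.2) ?_ ?_ ?_ ?_ ?_
  · intro k hk
    rw [mem_filter_piFinset_Icc_iff, Fin.forall_fin_succ, Fin.sum_univ_succ] at hk
    rw [mem_sigma, mem_Icc, mem_filter_piFinset_Icc_iff]
    exact ⟨⟨hk.1.1, by dsimp only; omega⟩, hk.1.2, by simp only [Fin.tail]; omega⟩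
  · rintro ⟨i, t⟩ hp
    rw [mem_sigma, mem_Icc, mem_filter_piFinset_Icc_iff] at hp
    dsimp only at hp
    rw [mem_filter_piFinset_Icc_iff, Fin.forall_fin_succ, Fin.sum_univ_succ]
    simp only [Fin.cons_zero, Fin.cons_succ]
    exact ⟨⟨hp.1.1, hp.2.1⟩, by omega⟩
  · intro k _
    exact Fin.cons_self_tail k
  · rintro ⟨i, t⟩ _
    simp only [Fin.cons_zero, Fin.tail_cons]
  · intro k _
    simp only [Fin.prod_univ_succ, Fin.tail, one_div]

lemma coeff_mk_mul_mk {R : Type*} [CommSemiring R] (f g : ℕ → R) (n : ℕ) :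
    coeff n (mk f * mk g) = ∑ k ∈ range (n + 1), f k * g (n - k) := by
  rw [coeff_mul, Nat.sum_antidiagonal_eq_sum_range_succ_mk]
  simp only [coeff_mk]

def hmlSeries (m : ℕ) : ℚ⟦X⟧ := mk fun n => Hml n m

lemma hmlSeries_succ (m : ℕ) : hmlSeries (m + 1) = logInvOneSub * hmlSeries m := by
  ext n
  simp only [hmlSeries, logInvOneSub, coeff_mk, coeff_mk_mul_mk, Hml_succ]
  refine sum_subset (fun i hi => ?_) (fun i hi hi' => ?_)
  · rw [mem_Icc] at hi
    rw [mem_range]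
    omega
  · rw [mem_range] at hi
    rw [mem_Icc] at hi'
    obtain rfl : i = 0 := by omega
    rw [Nat.cast_zero, inv_zero, zero_mul]

theorem stmt_19 (n m : ℕ) :
    ∑ k ∈ Finset.range (n + 1),
        ((2 * k).choose k : ℚ) * oddharm k * Hml (n - k) m / 4 ^ k =
      (1 / 2) * ∑ k ∈ Finset.range (n + 1),
        ((2 * k).choose k : ℚ) * Hml (n - k) (m + 1) / 4 ^ k := by
  calc _ = coeff n (centralBinomOddharmSeries * hmlSeries m) := by
        rw [centralBinomOddharmSeries, hmlSeries, coeff_mk_mul_mk]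
        refine sum_congr rfl fun k _ => ?_
        rw [Nat.centralBinom_eq_two_mul_choose]
        ring
    _ = 1 / 2 * coeff n (centralBinomSeries * hmlSeries (m + 1)) := by
        rw [hmlSeries_succ, ← mul_assoc, centralBinomSeries_mul_logInvOneSub, mul_assoc,
          ← map_ofNat C 2, coeff_C_mul]
        ring
    _ = _ := by
        rw [centralBinomSeries, hmlSeries, coeff_mk_mul_mk]
        refine congrArg _ (sum_congr rfl fun k _ => ?_)
        rw [Nat.centralBinom_eq_two_mul_choose]
        ring
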